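/- Let α > 0, β > 0, 0 < k < 1, C > 0, τ > 0, κ > 0, and let B be an integer with B ≥ 1. Let w* be the unique positive solution of α·w^(k−1)·(1 − (1+2^B)(w/(Cτ))^B) = β·w·(1+2^B)(w/(Cτ))^B, and set p* = (w*/(Cτ))^B. Assume B > (2 − k)(1 − (1+2^B)p*). Define M = (2 − k)(1 − (1+2^B)p*)·α·(w*)^(k−1)/τ and N = B·α·(w*)^(k−1)/τ. Then every complex root λ of λ + κM + κN·exp(−λτ) = 0 has negative real part if and only if κ·α·(w*)^(k−1)·√(B² − (k−2)²(1 − (1+2^B)p*)²) < arccos((k−2)(1 − (1+2^B)p*)/B). -/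

import Mathlib

/-!
This is Hayes' criterion for `λ + a + b e^{-λτ}` with `a = κM < b = κN`.
A root with `Re λ ≥ 0` satisfies `|λ + a| = b e^{-τ Re λ} ≤ b`, so `|Im λ| ≤ √(b² - a²)`;
if `τ √(b² - a²) < arccos (-a/b)` this gives `cos (τ Im λ) > -a/b`, which makes the real part of
the equation positive.
Conversely, parametrise `Im λ = θ / τ` with `θ ∈ (arccos (-a/b), π)` and solve the imaginary
part of the equation for `Re λ = X θ`; the real part becomes a continuous `G θ`, nonnegative at
`θ = arccos (-a/b)` (where `X ≥ 0` by assumption) and negative near `π` (where `X → -∞`).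
The intermediate value theorem for `min G X` gives `θ` with `G θ = 0` and `X θ ≥ 0`, because at a
zero of `X` we have `G θ = a + b cos θ ≤ 0` anyway.
-/

open Real Complex Filter Topology Set

theorem mul_sin_arccos_neg_div (a : ℝ) {b : ℝ} (hb : 0 < b) :
    b * Real.sin (arccos (-(a / b))) = √(b ^ 2 - a ^ 2) := by
  rw [sin_arccos, neg_sq, div_pow, one_sub_div (by positivity), sqrt_div' _ (sq_nonneg b),
    sqrt_sq hb.le]
  field_simp

theorem exists_mem_Icc_eq_zero_and_nonneg {f g : ℝ → ℝ} {a b : ℝ} (hab : a ≤ b)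
    (hf : ContinuousOn f (Icc a b)) (hg : ContinuousOn g (Icc a b)) (hfa : 0 ≤ f a)
    (hga : 0 ≤ g a) (hfb : f b ≤ 0) (hfg : ∀ x ∈ Icc a b, g x = 0 → f x ≤ 0) :
    ∃ x ∈ Icc a b, f x = 0 ∧ 0 ≤ g x := by
  obtain ⟨x, hx, hmin⟩ := intermediate_value_Icc' hab (hf.inf hg)
    ⟨(min_le_left _ _).trans hfb, le_min hfa hga⟩
  refine ⟨x, hx, ?_, hmin ▸ min_le_right _ _⟩
  rcases min_choice (f x) (g x) with hfx | hgx
  · exact hfx ▸ hmin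
  · exact (hfg x hx (hgx ▸ hmin)).antisymm (hmin ▸ min_le_left _ _)

noncomputable def delayChar (a b τ : ℝ) (z : ℂ) : ℂ := z + a + b * Complex.exp (-z * τ)

theorem delayChar_eq_zero_iff (a b τ : ℝ) (z : ℂ) :
    delayChar a b τ z = 0 ↔
      z.re + a + b * rexp (-(z.re * τ)) * Real.cos (z.im * τ) = 0 ∧
        z.im = b * rexp (-(z.re * τ)) * Real.sin (z.im * τ) := by
  simp only [delayChar, Complex.ext_iff, add_re, add_im, mul_re, mul_im, ofReal_re, ofReal_im,
    exp_re, exp_im, neg_re, neg_im, zero_re, zero_im, mul_zero, sub_zero, zero_mul, add_zero,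
    zero_add, Real.cos_neg, Real.sin_neg, neg_mul]
  constructor <;> rintro ⟨h₁, h₂⟩ <;> refine ⟨by linarith, by linarith⟩

/-- Along `Im z = θ / τ`, the real part for which the imaginary part of `delayChar a b τ z`
vanishes. -/
noncomputable def delayCurveRe (b τ θ : ℝ) : ℝ := Real.log (τ * b * Real.sin θ / θ) / τ

theorem mul_exp_delayCurveRe {b τ θ : ℝ} (hb : 0 < b) (hτ : 0 < τ) (hθ : 0 < θ) (hθπ : θ < π) :
    b * rexp (-(delayCurveRe b τ θ * τ)) * Real.sin θ = θ / τ := by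
  have hsin := Real.sin_pos_of_pos_of_lt_pi hθ hθπ
  rw [delayCurveRe, div_mul_cancel₀ _ hτ.ne', Real.exp_neg, Real.exp_log (by positivity)]
  field_simp

theorem delayChar_eq_zero_of_delayCurveRe {a b τ θ : ℝ} (hb : 0 < b) (hτ : 0 < τ) (hθ : 0 < θ)
    (hθπ : θ < π)
    (h : delayCurveRe b τ θ + a + b * rexp (-(delayCurveRe b τ θ * τ)) * Real.cos θ = 0) :
    delayChar a b τ ⟨delayCurveRe b τ θ, θ / τ⟩ = 0 := by
  rw [delayChar_eq_zero_iff, div_mul_cancel₀ _ hτ.ne', mul_exp_delayCurveRe hb hτ hθ hθπ]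
  exact ⟨h, rfl⟩

theorem continuousOn_delayCurveRe {b τ : ℝ} (hb : b ≠ 0) (hτ : τ ≠ 0) :
    ContinuousOn (delayCurveRe b τ) (Ioo 0 π) := by
  refine ContinuousOn.div_const (ContinuousOn.log ?_ fun θ hθ => ?_) τ
  · exact (continuous_const.mul Real.continuous_sin).continuousOn.div continuousOn_id
      fun θ hθ => hθ.1.ne'
  · have := Real.sin_pos_of_pos_of_lt_pi hθ.1 hθ.2
    have := hθ.1
    positivity

theorem exists_delayCurveRe_lt {b τ θ₀ : ℝ} (hb : 0 < b) (hτ : 0 < τ) (hθ₀ : θ₀ < π) (c : ℝ) :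
    ∃ θ ∈ Ioo θ₀ π, delayCurveRe b τ θ < c := by
  have hlim : Tendsto (fun θ => τ * b * Real.sin θ / θ) (𝓝[<] π) (𝓝 0) := by
    have : ContinuousAt (fun θ => τ * b * Real.sin θ / θ) π := by fun_prop (disch := positivity)
    simpa [Real.sin_pi] using this.tendsto.mono_left nhdsWithin_le_nhds
  obtain ⟨θ, hsmall, hθ, hθπ⟩ := ((hlim.eventually (gt_mem_nhds (exp_pos (c * τ)))).and
    (Ioo_mem_nhdsLT (max_lt hθ₀ pi_pos))).exists
  have hθ₀' : 0 < θ := (le_max_right _ _).trans_lt hθ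
  have hsin := Real.sin_pos_of_pos_of_lt_pi hθ₀' hθπ
  refine ⟨θ, ⟨(le_max_left _ _).trans_lt hθ, hθπ⟩, ?_⟩
  rw [delayCurveRe, div_lt_iff₀ hτ, Real.log_lt_iff_lt_exp (by positivity)]
  exact hsmall

theorem exists_delayChar_eq_zero_re_nonneg {a b τ : ℝ} (ha : 0 ≤ a) (hab : a < b) (hτ : 0 < τ)
    (h : arccos (-(a / b)) ≤ τ * √(b ^ 2 - a ^ 2)) :
    ∃ z, delayChar a b τ z = 0 ∧ 0 ≤ z.re := by
  have hb : 0 < b := ha.trans_lt hab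
  have hab' : a / b < 1 := (div_lt_one hb).2 hab
  have hab0 : 0 ≤ a / b := div_nonneg ha hb.le
  set θ₀ := arccos (-(a / b))
  have hθ₀ : 0 < θ₀ := arccos_pos.2 (by linarith)
  have hθ₀π : θ₀ < π := arccos_lt_pi.2 (by linarith)
  have hcos₀ : Real.cos θ₀ = -(a / b) := cos_arccos (by linarith) (by linarith)
  set X := delayCurveRe b τ
  set G := fun θ => X θ + a + b * rexp (-(X θ * τ)) * Real.cos θ
  have hX₀ : 0 ≤ X θ₀ := by
    refine div_nonneg (Real.log_nonneg ?_) hτ.le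
    rwa [mul_assoc, mul_sin_arccos_neg_div a hb, le_div_iff₀ hθ₀, one_mul]
  have hG₀ : 0 ≤ G θ₀ := by
    have : rexp (-(X θ₀ * τ)) ≤ 1 := exp_le_one_iff.2 (by nlinarith)
    show 0 ≤ X θ₀ + a + b * rexp (-(X θ₀ * τ)) * Real.cos θ₀
    rw [hcos₀, mul_neg, mul_right_comm, mul_div_cancel₀ _ hb.ne']
    nlinarith [mul_le_mul_of_nonneg_left this ha]
  obtain ⟨θ₁, ⟨hθ₀₁, hθ₁π⟩, hX₁⟩ := exists_delayCurveRe_lt hb hτ hθ₀π (-a)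
  have hcos : ∀ θ ∈ Icc θ₀ θ₁, Real.cos θ ≤ -(a / b) := fun θ hθ =>
    hcos₀ ▸ Real.cos_le_cos_of_nonneg_of_le_pi hθ₀.le (hθ.2.trans hθ₁π.le) hθ.1
  have hG₁ : G θ₁ ≤ 0 := by
    have : b * rexp (-(X θ₁ * τ)) * Real.cos θ₁ ≤ 0 :=
      mul_nonpos_of_nonneg_of_nonpos (by positivity)
        ((hcos θ₁ ⟨hθ₀₁.le, le_rfl⟩).trans (by linarith))
    show X θ₁ + a + b * rexp (-(X θ₁ * τ)) * Real.cos θ₁ ≤ 0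
    linarith
  have hGX : ∀ θ ∈ Icc θ₀ θ₁, X θ = 0 → G θ ≤ 0 := by
    intro θ hθ hX0
    show X θ + a + b * rexp (-(X θ * τ)) * Real.cos θ ≤ 0
    rw [hX0, zero_mul, neg_zero, Real.exp_zero, mul_one, zero_add]
    have := mul_le_mul_of_nonneg_left (hcos θ hθ) hb.le
    rw [mul_neg, mul_div_cancel₀ _ hb.ne'] at this
    linarith
  have hIcc : Icc θ₀ θ₁ ⊆ Ioo 0 π := fun θ hθ => ⟨hθ₀.trans_le hθ.1, hθ.2.trans_lt hθ₁π⟩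
  have hXcont := (continuousOn_delayCurveRe hb.ne' hτ.ne').mono hIcc
  obtain ⟨θ, hθ, hGθ, hXθ⟩ :=
    exists_mem_Icc_eq_zero_and_nonneg hθ₀₁.le (by fun_prop) hXcont hG₀ hX₀ hG₁ hGX
  exact ⟨_, delayChar_eq_zero_of_delayCurveRe hb hτ (hIcc hθ).1 (hIcc hθ).2 hGθ, hXθ⟩

theorem re_neg_of_delayChar_eq_zero {a b τ : ℝ} {z : ℂ} (ha : 0 ≤ a) (hab : a ≤ b) (hb : 0 < b)
    (hτ : 0 ≤ τ) (h : τ * √(b ^ 2 - a ^ 2) < arccos (-(a / b))) (hz : delayChar a b τ z = 0) :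
    z.re < 0 := by
  by_contra! hx
  obtain ⟨hre, him⟩ := (delayChar_eq_zero_iff a b τ z).1 hz
  set x := z.re
  set y := z.im
  set E := rexp (-(x * τ))
  have hE : E ≤ 1 := exp_le_one_iff.2 (by nlinarith)
  have hmod : (x + a) ^ 2 + y ^ 2 = (b * E) ^ 2 := by
    linear_combination (x + a - b * E * Real.cos (y * τ)) * hre +
      (y + b * E * Real.sin (y * τ)) * him + (b * E) ^ 2 * Real.sin_sq_add_cos_sq (y * τ)
  have hy : |y| * τ < arccos (-(a / b)) := by
    refine lt_of_le_of_lt ?_ (mul_comm τ _ ▸ h)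
    refine mul_le_mul_of_nonneg_right (Real.abs_le_sqrt ?_) hτ
    have hbE : (b * E) ^ 2 ≤ b ^ 2 := by
      rw [mul_pow]
      exact mul_le_of_le_one_right (sq_nonneg b) (pow_le_one₀ (exp_pos _).le hE)
    nlinarith [mul_nonneg hx ha]
  have hcos : -(a / b) < Real.cos (y * τ) := by
    have hab' : a / b ≤ 1 := (div_le_one hb).2 hab
    have hab0 : 0 ≤ a / b := div_nonneg ha hb.le
    rw [← Real.cos_abs, abs_mul, abs_of_nonneg hτ]
    calc -(a / b) = Real.cos (arccos (-(a / b))) := (cos_arccos (by linarith) (by linarith)).symm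
      _ < Real.cos (|y| * τ) := Real.strictAntiOn_cos
          ⟨by positivity, hy.le.trans (arccos_le_pi _)⟩ ⟨arccos_nonneg _, arccos_le_pi _⟩ hy
  have := mul_lt_mul_of_pos_left hcos (mul_pos hb (exp_pos (-(x * τ))))
  rw [mul_neg, mul_comm b E, mul_assoc, mul_div_cancel₀ _ hb.ne'] at this
  nlinarith

theorem delayChar_stable_iff {a b τ : ℝ} (ha : 0 ≤ a) (hab : a < b) (hτ : 0 < τ) :
    (∀ z, delayChar a b τ z = 0 → z.re < 0) ↔ τ * √(b ^ 2 - a ^ 2) < arccos (-(a / b)) := by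
  refine ⟨fun hstable => ?_, fun h z => re_neg_of_delayChar_eq_zero ha hab.le
    (ha.trans_lt hab) hτ.le h⟩
  by_contra! h
  obtain ⟨z, hz, hre⟩ := exists_delayChar_eq_zero_re_nonneg ha hab hτ h
  exact (hstable z hz).not_ge hre

theorem delayChar_mul_stable_iff {s m n τ : ℝ} (hs : 0 < s) (hm : 0 ≤ m) (hmn : m < n)
    (hτ : 0 < τ) :
    (∀ z, delayChar (s * m) (s * n) τ z = 0 → z.re < 0) ↔
      τ * s * √(n ^ 2 - m ^ 2) < arccos (-(m / n)) := by
  rw [delayChar_stable_iff (by positivity) (mul_lt_mul_of_pos_left hmn hs) hτ,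
    mul_div_mul_left _ _ hs.ne', show (s * n) ^ 2 - (s * m) ^ 2 = s ^ 2 * (n ^ 2 - m ^ 2) by ring,
    sqrt_mul (sq_nonneg s), sqrt_sq hs.le, mul_assoc]

theorem stmt13_general (α β k C τ κ : ℝ) (B : ℤ) (w p M N : ℝ)
    (hα : 0 < α) (hβ : 0 < β) (hk1 : k < 1)
    (hC : 0 < C) (hτ : 0 < τ) (hκ : 0 < κ)
    (hw : 0 < w)
    (hweq : α * w ^ (k - 1) * (1 - (1 + (2 : ℝ) ^ B) * (w / (C * τ)) ^ B) =
      β * w * ((1 + (2 : ℝ) ^ B) * (w / (C * τ)) ^ B))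
    (hp : p = (w / (C * τ)) ^ B)
    (hBp : (2 - k) * (1 - (1 + (2 : ℝ) ^ B) * p) < (B : ℝ))
    (hM : M = (2 - k) * (1 - (1 + (2 : ℝ) ^ B) * p) * α * w ^ (k - 1) / τ)
    (hN : N = (B : ℝ) * α * w ^ (k - 1) / τ) :
    (∀ z : ℂ, z + (κ : ℂ) * (M : ℂ) + (κ : ℂ) * (N : ℂ) * Complex.exp (-z * (τ : ℂ)) = 0 →
      z.re < 0) ↔
    κ * α * w ^ (k - 1) *
        Real.sqrt ((B : ℝ) ^ 2 - (k - 2) ^ 2 * (1 - (1 + (2 : ℝ) ^ B) * p) ^ 2) <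
      Real.arccos ((k - 2) * (1 - (1 + (2 : ℝ) ^ B) * p) / (B : ℝ)) := by
  have hA : 0 < w ^ (k - 1) := rpow_pos_of_pos hw _
  subst hp
  set q := 1 - (1 + (2 : ℝ) ^ B) * (w / (C * τ)) ^ B
  have hq : 0 < q := by
    have : 0 < α * w ^ (k - 1) * q := hweq ▸ by positivity
    exact pos_of_mul_pos_right this (by positivity)
  have hs : 0 < κ * α * w ^ (k - 1) / τ := by positivity
  have hchar : ∀ z : ℂ, z + κ * M + κ * N * Complex.exp (-z * τ) =
      delayChar (κ * α * w ^ (k - 1) / τ * ((2 - k) * q)) (κ * α * w ^ (k - 1) / τ * B) τ z := by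
    intro z
    rw [hM, hN, delayChar]
    push_cast
    ring
  simp_rw [hchar, delayChar_mul_stable_iff hs (mul_pos (by linarith) hq).le hBp hτ,
    mul_div_cancel₀ _ hτ.ne', ← neg_div, ← neg_mul, neg_sub,
    show ((2 - k) * q) ^ 2 = (k - 2) ^ 2 * q ^ 2 by ring]

/-- Case III local stability criterion: with w* the (unique) positive equilibrium,
p* = (w*/(Cτ))^B, B > (2−k)(1−(1+2^B)p*), M = (2−k)(1−(1+2^B)p*)·α·(w*)^(k−1)/τ and
N = B·α·(w*)^(k−1)/τ, every root of λ + κM + κN·e^{−λτ} = 0 has negative real part iff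
κ·α·(w*)^(k−1)·√(B² − (k−2)²(1−(1+2^B)p*)²) < arccos((k−2)(1−(1+2^B)p*)/B). -/
theorem stmt13 (α β k C τ κ : ℝ) (B : ℤ) (w p M N : ℝ)
    (hα : 0 < α) (hβ : 0 < β) (hk0 : 0 < k) (hk1 : k < 1)
    (hC : 0 < C) (hτ : 0 < τ) (hκ : 0 < κ) (hB : 1 ≤ B)
    (hw : 0 < w)
    (hweq : α * w ^ (k - 1) * (1 - (1 + (2 : ℝ) ^ B) * (w / (C * τ)) ^ B) =
      β * w * ((1 + (2 : ℝ) ^ B) * (w / (C * τ)) ^ B))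
    (hp : p = (w / (C * τ)) ^ B)
    (hBp : (2 - k) * (1 - (1 + (2 : ℝ) ^ B) * p) < (B : ℝ))
    (hM : M = (2 - k) * (1 - (1 + (2 : ℝ) ^ B) * p) * α * w ^ (k - 1) / τ)
    (hN : N = (B : ℝ) * α * w ^ (k - 1) / τ) :
    (∀ z : ℂ, z + (κ : ℂ) * (M : ℂ) + (κ : ℂ) * (N : ℂ) * Complex.exp (-z * (τ : ℂ)) = 0 →
      z.re < 0) ↔
    κ * α * w ^ (k - 1) *
        Real.sqrt ((B : ℝ) ^ 2 - (k - 2) ^ 2 * (1 - (1 + (2 : ℝ) ^ B) * p) ^ 2) <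
      Real.arccos ((k - 2) * (1 - (1 + (2 : ℝ) ^ B) * p) / (B : ℝ)) :=
  stmt13_general α β k C τ κ B w p M N hα hβ hk1 hC hτ hκ hw hweq hp hBp hM hN
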